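/- Let D ≥ 2 be an integer, c₂ > 0 and s₀ ≥ 1 reals, and let F be a Borel probability measure on [0,∞) with mean ∫ s dF(s) = 1 and tail F((s,∞)) ≤ c₂ s^{-D/(D-1)} for all s ≥ s₀. For q > 0 and an integer h ≥ 1, define J_h(s) = e^{-qs} Σ_{i=h}^{∞} (qs)^{i}/i!. Let m ≥ 2 and h₁, …, h_m be positive integers with h_T = h₁ + ⋯ + h_m ≥ 5, let k be a real number with k ≥ D·max(c₂, 1/c₂)·s₀^{2h_T}·h_T^{h_T+1}, and suppose 0 < q ≤ min(c₂, k^{-(D-1)(h_T+1)}). Then (3k)^{m-1} · (∏_{ℓ=1}^{m-1} ∫_0^{∞} J_{h_ℓ}(s) dF(s)) · ∫_0^{∞} (k+s) J_{h_m}(s) dF(s) ≤ 81 D² (c₂+1)² s₀^{2h_T} h_T^{h_T} (3k)^{h_T} q^{D/(D-1)}. -/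

import Mathlib

/-!
Since `J_h(s) ≤ min (q s, 1) ^ h`, every block integral is at most `q` by the unit mean. Enlarging
`c₂` to `C = max c₂ (s₀ ^ β)` makes the tail bound `F (s, ∞) ≤ C s ^ (-β)` hold for every `s > 0`,
and the layer-cake formula then gives `∫ J_h dF ≤ C h / (h - β) q ^ β` for `h > β` and
`∫ s J_n(s) dF ≤ C ((n + 1) / (n + 1 - β) + β / (β - 1)) q ^ (β - 1)` for `n + 1 > β`.
With at least three blocks the factor `q ^ (m - 1) ≤ q ^ β` suffices. With two blocks, as
`h₁ + h₂ ≥ 4`, either the last block has size at least `2` or the first one has size at least `3`,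
and the corresponding sharper estimate supplies the missing powers of `q`.
-/

open Filter Topology MeasureTheory

/-- `J q h s = e^{-qs} Σ_{i=h}^{∞} (qs)^i/i!`, the probability that a Poisson random
variable with mean `qs` is at least `h`. -/
noncomputable def jsqPoissonTail (q : ℝ) (h : ℕ) (s : ℝ) : ℝ :=
  Real.exp (-(q * s)) * ∑' i : ℕ, (q * s) ^ (h + i) / (Nat.factorial (h + i) : ℝ)

open Set Real

lemma pow_mul_inv_rpow {q : ℝ} (hq : 0 < q) (n : ℕ) (a : ℝ) :
    q ^ n * q⁻¹ ^ ((n : ℝ) - a) = q ^ a := by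
  rw [inv_rpow hq.le, ← rpow_neg hq.le, ← rpow_natCast, ← rpow_add hq]
  ring_nf

lemma pow_le_rpow_of_le {q β : ℝ} (hq0 : 0 < q) (hq1 : q ≤ 1) {n : ℕ} (hn : β ≤ n) :
    q ^ n ≤ q ^ β := by
  rw [← rpow_natCast]
  exact rpow_le_rpow_of_exponent_ge hq0 hq1 hn

lemma succ_div_succ_sub_le_three {β : ℝ} (hβ : β ≤ 2) {n : ℕ} (hn : 2 ≤ n) :
    ((n : ℝ) + 1) / (n + 1 - β) ≤ 3 := by
  have hn' : (2 : ℝ) ≤ n := by exact_mod_cast hn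
  rw [div_le_iff₀ (by linarith)]
  linarith

section PoissonTail

variable {q s : ℝ} {h : ℕ}

lemma jsqPoissonTail_eq (q : ℝ) (h : ℕ) (s : ℝ) :
    jsqPoissonTail q h s =
      1 - exp (-(q * s)) * ∑ i ∈ Finset.range h, (q * s) ^ i / (i.factorial : ℝ) := by
  have hexp : ∑' i : ℕ, (q * s) ^ i / (i.factorial : ℝ) = exp (q * s) := by
    rw [exp_eq_exp_ℝ, NormedSpace.exp_eq_tsum_div]
  have hsplit := (summable_pow_div_factorial (q * s)).sum_add_tsum_nat_add h
  simp only [add_comm _ h] at hsplit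
  rw [jsqPoissonTail, eq_sub_of_add_eq' (hsplit.trans hexp), mul_sub, ← exp_add]
  simp

lemma continuous_jsqPoissonTail (q : ℝ) (h : ℕ) : Continuous (jsqPoissonTail q h) := by
  simp_rw [funext (jsqPoissonTail_eq q h)]
  fun_prop

lemma jsqPoissonTail_nonneg (hx : 0 ≤ q * s) : 0 ≤ jsqPoissonTail q h s := by
  rw [jsqPoissonTail_eq, sub_nonneg]
  calc exp (-(q * s)) * ∑ i ∈ Finset.range h, (q * s) ^ i / (i.factorial : ℝ)
      ≤ exp (-(q * s)) * exp (q * s) :=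
        mul_le_mul_of_nonneg_left (sum_le_exp_of_nonneg hx h) (exp_pos _).le
    _ = 1 := by rw [← exp_add, neg_add_cancel, exp_zero]

lemma jsqPoissonTail_le_one (hx : 0 ≤ q * s) : jsqPoissonTail q h s ≤ 1 := by
  rw [jsqPoissonTail_eq, sub_le_self_iff]
  exact mul_nonneg (exp_pos _).le
    (Finset.sum_nonneg fun i _ => div_nonneg (pow_nonneg hx i) (Nat.cast_nonneg _))

lemma jsqPoissonTail_le_pow (hx : 0 ≤ q * s) : jsqPoissonTail q h s ≤ (q * s) ^ h := by
  set x := q * s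
  have hterm : ∀ i : ℕ, x ^ (h + i) / ((h + i).factorial : ℝ) ≤ x ^ h * (x ^ i / i.factorial) := by
    intro i
    rw [pow_add, mul_div_assoc]
    gcongr
    omega
  have hsum : ∑' i : ℕ, x ^ (h + i) / ((h + i).factorial : ℝ) ≤ x ^ h * exp x := by
    rw [exp_eq_exp_ℝ, NormedSpace.exp_eq_tsum_div, ← tsum_mul_left]
    exact Summable.tsum_le_tsum hterm
      ((summable_pow_div_factorial x).comp_injective (add_right_injective h))
      ((summable_pow_div_factorial x).mul_left _)
  calc jsqPoissonTail q h s ≤ exp (-x) * (x ^ h * exp x) :=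
        mul_le_mul_of_nonneg_left hsum (exp_pos _).le
    _ = x ^ h := by rw [mul_left_comm, ← exp_add, neg_add_cancel, exp_zero, mul_one]

lemma jsqPoissonTail_le_pow_min (hq : 0 < q) (hs : 0 ≤ s) :
    jsqPoissonTail q h s ≤ q ^ h * min s q⁻¹ ^ h := by
  rw [← mul_pow, mul_min_of_nonneg _ _ hq.le, mul_inv_cancel₀ hq.ne']
  rcases le_total (q * s) 1 with hqs | hqs
  · rw [min_eq_left hqs]
    exact jsqPoissonTail_le_pow (by positivity)
  · rw [min_eq_right hqs, one_pow]
    exact jsqPoissonTail_le_one (by positivity)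

end PoissonTail

section PowerTail

variable {F : Measure ℝ} {C β : ℝ}

lemma measure_Ioi_le_max_mul_rpow [IsProbabilityMeasure F] {c s₀ : ℝ} (hs₀ : 0 < s₀)
    (hβ : 0 ≤ β) (htail : ∀ s, s₀ ≤ s → F (Ioi s) ≤ ENNReal.ofReal (c * s ^ (-β)))
    {t : ℝ} (ht : 0 < t) : F (Ioi t) ≤ ENNReal.ofReal (max c (s₀ ^ β) * t ^ (-β)) := by
  rcases le_or_gt s₀ t with hst | hst
  · exact (htail t hst).trans <| ENNReal.ofReal_le_ofReal <|
      mul_le_mul_of_nonneg_right (le_max_left _ _) (rpow_nonneg ht.le _)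
  · have hone : 1 ≤ s₀ ^ β * t ^ (-β) := by
      rw [rpow_neg ht.le, ← div_eq_mul_inv, ← div_rpow hs₀.le ht.le]
      exact one_le_rpow ((one_le_div ht).2 hst.le) hβ
    calc F (Ioi t) ≤ ENNReal.ofReal 1 := by rw [ENNReal.ofReal_one]; exact prob_le_one
      _ ≤ _ := ENNReal.ofReal_le_ofReal <| hone.trans <|
          mul_le_mul_of_nonneg_right (le_max_right _ _) (rpow_nonneg ht.le _)

lemma integral_min_pow_le_rpow (hF : ∀ᵐ s ∂F, 0 ≤ s)
    (htail : ∀ t, 0 < t → F (Ioi t) ≤ ENNReal.ofReal (C * t ^ (-β))) (hC : 0 ≤ C) {n : ℕ}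
    (hβ : β < n + 1) {U : ℝ} (hU : 0 ≤ U) :
    ∫ s, min s U ^ (n + 1) ∂F ≤ C * (n + 1) / (n + 1 - β) * U ^ ((n : ℝ) + 1 - β) := by
  have hr : -1 < (n : ℝ) - β := by linarith
  set φ : ℝ → ℝ := fun t => C * (n + 1) * t ^ ((n : ℝ) - β)
  have hlayer := lintegral_comp_eq_lintegral_meas_lt_mul F (f := fun s => min s U)
    (g := fun t => (n + 1) * t ^ n) (hF.mono fun s hs => le_min hs hU)
    (measurable_id.min measurable_const).aemeasurable
    (fun t _ => (continuous_const.mul (continuous_pow n)).intervalIntegrable _ _)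
    ((ae_restrict_iff' measurableSet_Ioi).2 <| ae_of_all _ fun t (ht : 0 < t) => by positivity)
  have hprim : ∀ x : ℝ, (n + 1 : ℝ) * ((x ^ (n + 1) - 0 ^ (n + 1)) / (n + 1)) = x ^ (n + 1) := by
    intro x
    field_simp
    simp
  simp only [intervalIntegral.integral_const_mul, integral_pow, hprim] at hlayer
  have hφ_int : IntegrableOn φ (Ioo 0 U) :=
    (((intervalIntegrable_iff_integrableOn_Ioc_of_le hU).1
      (intervalIntegral.intervalIntegrable_rpow' hr)).mono_set Ioo_subset_Ioc_self).const_mul _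
  have hφ_nn : 0 ≤ᵐ[volume.restrict (Ioo 0 U)] φ :=
    (ae_restrict_iff' measurableSet_Ioo).2 <| ae_of_all _ fun t ht => by
      have := ht.1
      positivity
  rw [integral_eq_lintegral_of_nonneg_ae (hF.mono fun s hs => pow_nonneg (le_min hs hU) _)
    ((measurable_id.min measurable_const).pow_const _).aestronglyMeasurable]
  refine ENNReal.toReal_le_of_le_ofReal (by positivity) ?_
  calc ∫⁻ s, ENNReal.ofReal (min s U ^ (n + 1)) ∂F
      = ∫⁻ t in Ioi 0, F {a | t < min a U} * ENNReal.ofReal ((n + 1) * t ^ n) := hlayer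
    _ ≤ ∫⁻ t in Ioi 0, (Iio U).indicator (fun t => ENNReal.ofReal (φ t)) t := by
        refine setLIntegral_mono ((by fun_prop : Measurable fun t => ENNReal.ofReal (φ t)).indicator
          measurableSet_Iio) fun t (ht : 0 < t) => ?_
        by_cases htU : t < U
        · rw [indicator_of_mem (show t ∈ Iio U from htU)]
          have hsub : {a | t < min a U} ⊆ Ioi t :=
            fun a (ha : t < min a U) => (lt_min_iff.1 ha).1
          refine (mul_le_mul_left ((measure_mono hsub).trans (htail t ht)) _).trans ?_
          rw [← ENNReal.ofReal_mul (by positivity)]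
          refine le_of_eq (congrArg ENNReal.ofReal ?_)
          simp only [φ, rpow_sub ht, rpow_neg ht.le, rpow_natCast]
          ring
        · have hempty : {a | t < min a U} = ∅ := by
            ext a
            simp only [lt_min_iff, mem_ofPred_eq, mem_empty_iff_false, iff_false]
            exact fun h => htU h.2
          rw [indicator_of_notMem (show t ∉ Iio U from htU), hempty, measure_empty, zero_mul]
    _ = ∫⁻ t in Ioo 0 U, ENNReal.ofReal (φ t) := by
        rw [setLIntegral_indicator measurableSet_Iio, inter_comm, Ioi_inter_Iio]
    _ = ENNReal.ofReal (∫ t in Ioo 0 U, φ t) :=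
        (ofReal_integral_eq_lintegral_ofReal hφ_int hφ_nn).symm
    _ = ENNReal.ofReal (C * (n + 1) / (n + 1 - β) * U ^ ((n : ℝ) + 1 - β)) := by
        congr 1
        rw [← integral_Ioc_eq_integral_Ioo, ← intervalIntegral.integral_of_le hU,
          intervalIntegral.integral_const_mul, integral_rpow (Or.inl hr),
          zero_rpow (by linarith), sub_zero, sub_add_eq_add_sub]
        ring

lemma setIntegral_Ioi_le_rpow
    (htail : ∀ t, 0 < t → F (Ioi t) ≤ ENNReal.ofReal (C * t ^ (-β))) (hC : 0 ≤ C) (hβ : 1 < β)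
    {U : ℝ} (hU : 0 < U) :
    ∫ s in Ioi U, s ∂F ≤ C * β / (β - 1) * U ^ (1 - β) := by
  have hpos : ∀ᵐ s ∂F.restrict (Ioi U), 0 ≤ s :=
    (ae_restrict_iff' measurableSet_Ioi).2 <| ae_of_all _ fun s (hs : U < s) => (hU.trans hs).le
  have hint : IntegrableOn (fun t => C * t ^ (-β)) (Ioi U) :=
    (integrableOn_Ioi_rpow_of_lt (by linarith) hU).const_mul C
  have hint_nn : 0 ≤ᵐ[volume.restrict (Ioi U)] fun t => C * t ^ (-β) :=
    (ae_restrict_iff' measurableSet_Ioi).2 <| ae_of_all _ fun t (ht : U < t) =>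
      mul_nonneg hC (rpow_nonneg (hU.trans ht).le _)
  rw [integral_eq_lintegral_of_nonneg_ae hpos measurable_id.aestronglyMeasurable]
  refine ENNReal.toReal_le_of_le_ofReal (by positivity) ?_
  rw [lintegral_eq_lintegral_meas_lt _ hpos measurable_id.aemeasurable,
    ← Ioc_union_Ioi_eq_Ioi hU.le, lintegral_union measurableSet_Ioi (Ioc_disjoint_Ioi le_rfl)]
  calc (∫⁻ t in Ioc 0 U, F.restrict (Ioi U) {a | t < a}) +
        ∫⁻ t in Ioi U, F.restrict (Ioi U) {a | t < a}
      ≤ (∫⁻ _ in Ioc 0 U, ENNReal.ofReal (C * U ^ (-β))) +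
          ∫⁻ t in Ioi U, ENNReal.ofReal (C * t ^ (-β)) := by
        refine add_le_add (setLIntegral_mono' measurableSet_Ioc fun t _ => ?_)
          (setLIntegral_mono' measurableSet_Ioi fun t (ht : U < t) => ?_)
        all_goals rw [Measure.restrict_apply' measurableSet_Ioi]
        · exact (measure_mono inter_subset_right).trans (htail U hU)
        · exact (measure_mono inter_subset_left).trans (htail t (hU.trans ht))
    _ = ENNReal.ofReal (C * U ^ (-β) * U + C * (-U ^ (-β + 1) / (-β + 1))) := by
        rw [setLIntegral_const, Real.volume_Ioc, sub_zero,
          ← ofReal_integral_eq_lintegral_ofReal hint hint_nn, integral_const_mul,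
          integral_Ioi_rpow_of_lt (by linarith) hU, ← ENNReal.ofReal_mul (by positivity),
          ← ENNReal.ofReal_add (by positivity) (mul_nonneg hC <|
            div_nonneg_of_nonpos (neg_nonpos.2 (rpow_nonneg hU.le _)) (by linarith))]
    _ = ENNReal.ofReal (C * β / (β - 1) * U ^ (1 - β)) := by
        congr 1
        have h1 : (1 : ℝ) - β ≠ 0 := by linarith
        have h2 : β - 1 ≠ 0 := by linarith
        rw [neg_add_eq_sub, rpow_sub hU, rpow_neg hU.le, rpow_one]
        field_simp
        ring

lemma integrable_min_pow [IsFiniteMeasure F] (hF : ∀ᵐ s ∂F, 0 ≤ s) {U : ℝ} (hU : 0 ≤ U) (j : ℕ) :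
    Integrable (fun s => min s U ^ j) F :=
  Integrable.mono' (integrable_const (U ^ j))
    ((measurable_id.min measurable_const).pow_const j).aestronglyMeasurable <|
    hF.mono fun s hs => by
      rw [norm_pow, Real.norm_of_nonneg (le_min hs hU)]
      exact pow_le_pow_left₀ (le_min hs hU) (min_le_right _ _) j

end PowerTail

section PoissonTailIntegrals

variable {F : Measure ℝ} {C β q k : ℝ}

lemma jsqPoissonTail_le_mul {s : ℝ} {h : ℕ} (hh : 1 ≤ h) (hx : 0 ≤ q * s) :
    jsqPoissonTail q h s ≤ q * s := by
  rcases le_total (q * s) 1 with hqs | hqs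
  · exact (jsqPoissonTail_le_pow hx).trans (pow_le_of_le_one hx hqs (by omega))
  · exact (jsqPoissonTail_le_one hx).trans hqs

lemma integrable_jsqPoissonTail (hF : ∀ᵐ s ∂F, 0 ≤ s) (hint : Integrable (fun s => s) F)
    (hq : 0 ≤ q) {h : ℕ} (hh : 1 ≤ h) : Integrable (jsqPoissonTail q h) F :=
  (hint.const_mul q).mono' (continuous_jsqPoissonTail q h).aestronglyMeasurable <|
    hF.mono fun s hs => by
      have hx : 0 ≤ q * s := mul_nonneg hq hs
      rw [Real.norm_of_nonneg (jsqPoissonTail_nonneg hx)]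
      exact jsqPoissonTail_le_mul hh hx

lemma integrable_mul_jsqPoissonTail (hF : ∀ᵐ s ∂F, 0 ≤ s) (hint : Integrable (fun s => s) F)
    (hq : 0 ≤ q) (h : ℕ) : Integrable (fun s => s * jsqPoissonTail q h s) F :=
  hint.mono' (continuous_id.mul (continuous_jsqPoissonTail q h)).aestronglyMeasurable <|
    hF.mono fun s hs => by
      have hx : 0 ≤ q * s := mul_nonneg hq hs
      rw [Real.norm_of_nonneg (mul_nonneg hs (jsqPoissonTail_nonneg hx))]
      exact mul_le_of_le_one_right hs (jsqPoissonTail_le_one hx)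

lemma integral_jsqPoissonTail_le (hF : ∀ᵐ s ∂F, 0 ≤ s) (hint : Integrable (fun s => s) F)
    (hq : 0 ≤ q) {h : ℕ} (hh : 1 ≤ h) :
    ∫ s, jsqPoissonTail q h s ∂F ≤ q * ∫ s, s ∂F := by
  rw [← integral_const_mul]
  exact integral_mono_ae (integrable_jsqPoissonTail hF hint hq hh) (hint.const_mul q) <|
    hF.mono fun s hs => jsqPoissonTail_le_mul hh (mul_nonneg hq hs)

lemma integral_mul_jsqPoissonTail_le (hF : ∀ᵐ s ∂F, 0 ≤ s) (hint : Integrable (fun s => s) F)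
    (hq : 0 ≤ q) (h : ℕ) : ∫ s, s * jsqPoissonTail q h s ∂F ≤ ∫ s, s ∂F :=
  integral_mono_ae (integrable_mul_jsqPoissonTail hF hint hq h) hint <|
    hF.mono fun _ hs => mul_le_of_le_one_right hs (jsqPoissonTail_le_one (mul_nonneg hq hs))

lemma integral_jsqPoissonTail_le_of_tail [IsFiniteMeasure F] (hF : ∀ᵐ s ∂F, 0 ≤ s)
    (htail : ∀ t, 0 < t → F (Ioi t) ≤ ENNReal.ofReal (C * t ^ (-β))) (hC : 0 ≤ C) (hq : 0 < q)
    {n : ℕ} (hβ : β < n + 1) :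
    ∫ s, jsqPoissonTail q (n + 1) s ∂F ≤ C * (n + 1) / (n + 1 - β) * q ^ β := by
  calc ∫ s, jsqPoissonTail q (n + 1) s ∂F
      ≤ ∫ s, q ^ (n + 1) * min s q⁻¹ ^ (n + 1) ∂F :=
        integral_mono_of_nonneg (hF.mono fun _ hs => jsqPoissonTail_nonneg (by positivity))
          ((integrable_min_pow hF (inv_nonneg.2 hq.le) _).const_mul _)
          (hF.mono fun s hs => jsqPoissonTail_le_pow_min hq hs)
    _ ≤ q ^ (n + 1) * (C * (n + 1) / (n + 1 - β) * q⁻¹ ^ ((n : ℝ) + 1 - β)) := by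
        rw [integral_const_mul]
        gcongr
        exact integral_min_pow_le_rpow hF htail hC hβ (inv_nonneg.2 hq.le)
    _ = C * (n + 1) / (n + 1 - β) * q ^ β := by
        rw [mul_left_comm, show ((n : ℝ) + 1 - β) = ((n + 1 : ℕ) : ℝ) - β by push_cast; ring,
          pow_mul_inv_rpow hq]

lemma integral_mul_jsqPoissonTail_le_of_tail [IsFiniteMeasure F] (hF : ∀ᵐ s ∂F, 0 ≤ s)
    (hint : Integrable (fun s => s) F)
    (htail : ∀ t, 0 < t → F (Ioi t) ≤ ENNReal.ofReal (C * t ^ (-β))) (hC : 0 ≤ C) (hq : 0 < q)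
    (hβ1 : 1 < β) {n : ℕ} (hβ : β < n + 1) :
    ∫ s, s * jsqPoissonTail q n s ∂F ≤ C * ((n + 1) / (n + 1 - β) + β / (β - 1)) * q ^ (β - 1) := by
  have hU : 0 ≤ q⁻¹ := inv_nonneg.2 hq.le
  have hpt : ∀ s, 0 ≤ s → s * jsqPoissonTail q n s ≤
      q ^ n * min s q⁻¹ ^ (n + 1) + (Ioi q⁻¹).indicator (fun s => s) s := by
    intro s hs
    by_cases hsU : s ≤ q⁻¹
    · rw [indicator_of_notMem (show s ∉ Ioi q⁻¹ from not_lt.2 hsU), add_zero]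
      calc s * jsqPoissonTail q n s ≤ s * (q ^ n * min s q⁻¹ ^ n) :=
            mul_le_mul_of_nonneg_left (jsqPoissonTail_le_pow_min hq hs) hs
        _ = q ^ n * min s q⁻¹ ^ (n + 1) := by rw [min_eq_left hsU]; ring
    · rw [indicator_of_mem (show s ∈ Ioi q⁻¹ from lt_of_not_ge hsU)]
      exact (mul_le_of_le_one_right hs (jsqPoissonTail_le_one (mul_nonneg hq.le hs))).trans
        (le_add_of_nonneg_left (mul_nonneg (pow_nonneg hq.le _) (pow_nonneg (le_min hs hU) _)))
  have hint_min := (integrable_min_pow hF hU (n + 1)).const_mul (q ^ n)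
  have hint_tail := hint.indicator (measurableSet_Ioi (a := q⁻¹))
  calc ∫ s, s * jsqPoissonTail q n s ∂F
      ≤ ∫ s, (q ^ n * min s q⁻¹ ^ (n + 1) + (Ioi q⁻¹).indicator (fun s => s) s) ∂F :=
        integral_mono_ae (integrable_mul_jsqPoissonTail hF hint hq.le n)
          (hint_min.add hint_tail) (hF.mono hpt)
    _ = q ^ n * ∫ s, min s q⁻¹ ^ (n + 1) ∂F + ∫ s in Ioi q⁻¹, s ∂F := by
        rw [integral_add hint_min hint_tail, integral_const_mul,
          integral_indicator measurableSet_Ioi]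
    _ ≤ q ^ n * (C * (n + 1) / (n + 1 - β) * q⁻¹ ^ ((n : ℝ) + 1 - β)) +
          C * β / (β - 1) * q⁻¹ ^ (1 - β) := by
        gcongr
        · exact integral_min_pow_le_rpow hF htail hC hβ hU
        · exact setIntegral_Ioi_le_rpow htail hC hβ1 (inv_pos.2 hq)
    _ = C * ((n + 1) / (n + 1 - β) + β / (β - 1)) * q ^ (β - 1) := by
        rw [mul_left_comm, show ((n : ℝ) + 1 - β) = n - (β - 1) by ring, pow_mul_inv_rpow hq,
          show (1 : ℝ) - β = -(β - 1) by ring, inv_rpow hq.le, rpow_neg hq.le, inv_inv]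
        ring

lemma integral_add_mul_jsqPoissonTail (hF : ∀ᵐ s ∂F, 0 ≤ s) (hint : Integrable (fun s => s) F)
    (hq : 0 ≤ q) {h : ℕ} (hh : 1 ≤ h) :
    ∫ s, (k + s) * jsqPoissonTail q h s ∂F =
      k * ∫ s, jsqPoissonTail q h s ∂F + ∫ s, s * jsqPoissonTail q h s ∂F := by
  simp_rw [add_mul]
  rw [integral_add ((integrable_jsqPoissonTail hF hint hq hh).const_mul k)
    (integrable_mul_jsqPoissonTail hF hint hq h), integral_const_mul]

lemma integral_add_mul_jsqPoissonTail_le_two_mul (hF : ∀ᵐ s ∂F, 0 ≤ s)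
    (hmean : ∫ s, s ∂F = 1) (hq0 : 0 ≤ q) (hq1 : q ≤ 1) (hk : 1 ≤ k) {h : ℕ} (hh : 1 ≤ h) :
    ∫ s, (k + s) * jsqPoissonTail q h s ∂F ≤ 2 * k := by
  have hint : Integrable (fun s => s) F := .of_integral_ne_zero (by rw [hmean]; exact one_ne_zero)
  have hJ := integral_jsqPoissonTail_le hF hint hq0 hh
  have hsJ := integral_mul_jsqPoissonTail_le hF hint hq0 h
  rw [hmean] at hJ hsJ
  rw [integral_add_mul_jsqPoissonTail hF hint hq0 hh]
  nlinarith

end PoissonTailIntegrals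

noncomputable def partitionContribution (F : Measure ℝ) (q k : ℝ) (m : ℕ) (h : ℕ → ℕ) : ℝ :=
  (3 * k) ^ (m - 1) * (∏ ℓ ∈ Finset.range (m - 1), ∫ s, jsqPoissonTail q (h ℓ) s ∂F) *
    ∫ s, (k + s) * jsqPoissonTail q (h (m - 1)) s ∂F

section Partition

variable {F : Measure ℝ} {C β q k : ℝ}

lemma partitionContribution_le_of_three_le (hF : ∀ᵐ s ∂F, 0 ≤ s) (hmean : ∫ s, s ∂F = 1)
    (hβ : β ≤ 2) (hq0 : 0 < q) (hq1 : q ≤ 1) (hk : 1 ≤ k) {m : ℕ} (hm : 3 ≤ m) {h : ℕ → ℕ}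
    (hpos : ∀ ℓ < m, 1 ≤ h ℓ) :
    partitionContribution F q k m h ≤ (3 * k) ^ (∑ ℓ ∈ Finset.range m, h ℓ) * q ^ β := by
  have hint : Integrable (fun s => s) F := .of_integral_ne_zero (by rw [hmean]; exact one_ne_zero)
  have hJ : ∀ ℓ < m, ∫ s, jsqPoissonTail q (h ℓ) s ∂F ≤ q := fun ℓ hℓ => by
    simpa [hmean] using integral_jsqPoissonTail_le hF hint hq0.le (hpos ℓ hℓ)
  have hJ0 : ∀ ℓ, 0 ≤ ∫ s, jsqPoissonTail q (h ℓ) s ∂F := fun ℓ =>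
    integral_nonneg_of_ae (hF.mono fun s hs => jsqPoissonTail_nonneg (mul_nonneg hq0.le hs))
  have hP : ∏ ℓ ∈ Finset.range (m - 1), ∫ s, jsqPoissonTail q (h ℓ) s ∂F ≤ q ^ (m - 1) := by
    refine (Finset.prod_le_prod (fun ℓ _ => hJ0 ℓ) fun ℓ hℓ => hJ ℓ ?_).trans_eq (by simp)
    have := Finset.mem_range.1 hℓ
    omega
  have hL :=
    integral_add_mul_jsqPoissonTail_le_two_mul hF hmean hq0.le hq1 hk (hpos (m - 1) (by omega))
  have hmT : m ≤ ∑ ℓ ∈ Finset.range m, h ℓ := by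
    simpa using Finset.sum_le_sum fun ℓ hℓ => hpos ℓ (Finset.mem_range.1 hℓ)
  have hL0 : 0 ≤ ∫ s, (k + s) * jsqPoissonTail q (h (m - 1)) s ∂F :=
    integral_nonneg_of_ae <| hF.mono fun s hs =>
      mul_nonneg (by linarith) (jsqPoissonTail_nonneg (mul_nonneg hq0.le hs))
  have hqβ : q ^ (m - 1) ≤ q ^ β := pow_le_rpow_of_le hq0 hq1 <| by
    have : (3 : ℝ) ≤ m := by exact_mod_cast hm
    rw [Nat.cast_sub (by omega)]
    push_cast
    linarith
  calc partitionContribution F q k m h ≤ (3 * k) ^ (m - 1) * q ^ (m - 1) * (2 * k) :=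
        mul_le_mul (mul_le_mul_of_nonneg_left hP (by positivity)) hL hL0 (by positivity)
    _ ≤ (3 * k) ^ (m - 1) * q ^ β * (3 * k) := by gcongr; linarith
    _ = (3 * k) ^ m * q ^ β := by
        rw [mul_right_comm, ← pow_succ, Nat.sub_add_cancel (by omega)]
    _ ≤ (3 * k) ^ (∑ ℓ ∈ Finset.range m, h ℓ) * q ^ β := by
        gcongr
        linarith

lemma partitionContribution_two_le [IsFiniteMeasure F] (hF : ∀ᵐ s ∂F, 0 ≤ s)
    (hmean : ∫ s, s ∂F = 1) (htail : ∀ t, 0 < t → F (Ioi t) ≤ ENNReal.ofReal (C * t ^ (-β)))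
    (hC : 0 ≤ C) (hβ1 : 1 < β) (hβ2 : β ≤ 2) (hq0 : 0 < q) (hq1 : q ≤ 1) (hk : 1 ≤ k)
    {h : ℕ → ℕ} (h0 : 1 ≤ h 0) (h1 : 1 ≤ h 1) (h4 : 4 ≤ h 0 + h 1) :
    partitionContribution F q k 2 h ≤
      (1 + (β / (β - 1) + 3) * C) * (3 * k) ^ (h 0 + h 1) * q ^ β := by
  have hint : Integrable (fun s => s) F := .of_integral_ne_zero (by rw [hmean]; exact one_ne_zero)
  have hA : 0 ≤ β / (β - 1) := div_nonneg (by linarith) (by linarith)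
  have hJ0 : 0 ≤ ∫ s, jsqPoissonTail q (h 0) s ∂F :=
    integral_nonneg_of_ae (hF.mono fun s hs => jsqPoissonTail_nonneg (mul_nonneg hq0.le hs))
  have hL0 : 0 ≤ ∫ s, (k + s) * jsqPoissonTail q (h 1) s ∂F :=
    integral_nonneg_of_ae <| hF.mono fun s hs =>
      mul_nonneg (by linarith) (jsqPoissonTail_nonneg (mul_nonneg hq0.le hs))
  have h3k : 1 ≤ 3 * k := by linarith
  have hpow1 : 3 * k ≤ (3 * k) ^ (h 0 + h 1) := le_self_pow₀ h3k (by omega)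
  have hpow2 : (3 * k) ^ 2 ≤ (3 * k) ^ (h 0 + h 1) := pow_le_pow_right₀ h3k (by omega)
  simp only [partitionContribution, Nat.reduceSub, pow_one, Finset.prod_range_one]
  rcases Nat.lt_or_ge (h 1) 2 with hb | hb
  · obtain ⟨n, hn⟩ : ∃ n, h 0 = n + 1 := ⟨h 0 - 1, by omega⟩
    have hJ : ∫ s, jsqPoissonTail q (h 0) s ∂F ≤ C * 3 * q ^ β := by
      rw [hn]
      refine (integral_jsqPoissonTail_le_of_tail hF htail hC hq0 ?_).trans ?_
      · have : (2 : ℝ) ≤ n := by exact_mod_cast (by omega : 2 ≤ n)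
        linarith
      · rw [mul_div_assoc]
        gcongr
        exact succ_div_succ_sub_le_three hβ2 (by omega)
    have hL := integral_add_mul_jsqPoissonTail_le_two_mul hF hmean hq0.le hq1 hk h1
    calc 3 * k * (∫ s, jsqPoissonTail q (h 0) s ∂F) * ∫ s, (k + s) * jsqPoissonTail q (h 1) s ∂F
        ≤ 3 * k * (C * 3 * q ^ β) * (2 * k) :=
          mul_le_mul (mul_le_mul_of_nonneg_left hJ (by linarith)) hL hL0
            (mul_nonneg (by linarith) (mul_nonneg (mul_nonneg hC (by norm_num)) (by positivity)))
      _ = 2 * C * (3 * k) ^ 2 * q ^ β := by ring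
      _ ≤ (1 + (β / (β - 1) + 3) * C) * (3 * k) ^ (h 0 + h 1) * q ^ β := by
          gcongr
          nlinarith
  · have hJ : ∀ j, 1 ≤ j → ∫ s, jsqPoissonTail q j s ∂F ≤ q := fun j hj => by
      simpa [hmean] using integral_jsqPoissonTail_le hF hint hq0.le hj
    have hsJ : ∫ s, s * jsqPoissonTail q (h 1) s ∂F ≤ C * (3 + β / (β - 1)) * q ^ (β - 1) := by
      refine (integral_mul_jsqPoissonTail_le_of_tail hF hint htail hC hq0 hβ1 ?_).trans ?_
      · have : (2 : ℝ) ≤ h 1 := by exact_mod_cast hb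
        linarith
      · gcongr
        exact succ_div_succ_sub_le_three hβ2 hb
    have hL : ∫ s, (k + s) * jsqPoissonTail q (h 1) s ∂F ≤
        k * q + C * (3 + β / (β - 1)) * q ^ (β - 1) := by
      rw [integral_add_mul_jsqPoissonTail hF hint hq0.le h1]
      gcongr
      exact hJ _ h1
    have hq2 : q ^ 2 ≤ q ^ β := pow_le_rpow_of_le hq0 hq1 (by norm_num; linarith)
    have hqβ : q * q ^ (β - 1) = q ^ β := by
      rw [← rpow_one_add' hq0.le (by linarith), add_sub_cancel]
    calc 3 * k * (∫ s, jsqPoissonTail q (h 0) s ∂F) * ∫ s, (k + s) * jsqPoissonTail q (h 1) s ∂F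
        ≤ 3 * k * q * (k * q + C * (3 + β / (β - 1)) * q ^ (β - 1)) :=
          mul_le_mul (mul_le_mul_of_nonneg_left (hJ _ h0) (by linarith)) hL hL0
            (mul_nonneg (by linarith) hq0.le)
      _ = (3 * k) ^ 2 / 3 * q ^ 2 + (β / (β - 1) + 3) * C * (3 * k) * q ^ β := by
          rw [← hqβ]
          ring
      _ ≤ (3 * k) ^ (h 0 + h 1) * q ^ β +
            (β / (β - 1) + 3) * C * (3 * k) ^ (h 0 + h 1) * q ^ β := by
          gcongr
          linarith
      _ = (1 + (β / (β - 1) + 3) * C) * (3 * k) ^ (h 0 + h 1) * q ^ β := by ring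

lemma partitionContribution_le [IsFiniteMeasure F] (hF : ∀ᵐ s ∂F, 0 ≤ s)
    (hmean : ∫ s, s ∂F = 1) (htail : ∀ t, 0 < t → F (Ioi t) ≤ ENNReal.ofReal (C * t ^ (-β)))
    (hC : 0 ≤ C) (hβ1 : 1 < β) (hβ2 : β ≤ 2) (hq0 : 0 < q) (hq1 : q ≤ 1) (hk : 1 ≤ k)
    {m : ℕ} (hm : 2 ≤ m) {h : ℕ → ℕ} (hpos : ∀ ℓ < m, 1 ≤ h ℓ)
    (h4 : 4 ≤ ∑ ℓ ∈ Finset.range m, h ℓ) :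
    partitionContribution F q k m h ≤
      (1 + (β / (β - 1) + 3) * C) * (3 * k) ^ (∑ ℓ ∈ Finset.range m, h ℓ) * q ^ β := by
  rcases hm.eq_or_lt with rfl | hm3
  · have hsum : ∑ ℓ ∈ Finset.range 2, h ℓ = h 0 + h 1 := by simp [Finset.sum_range_succ]
    rw [hsum] at h4 ⊢
    exact partitionContribution_two_le hF hmean htail hC hβ1 hβ2 hq0 hq1 hk
      (hpos 0 (by norm_num)) (hpos 1 (by norm_num)) h4
  · have hA : 1 ≤ 1 + (β / (β - 1) + 3) * C :=
      le_add_of_nonneg_right (mul_nonneg (by positivity) hC)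
    refine (partitionContribution_le_of_three_le hF hmean hβ2 hq0 hq1 hk hm3 hpos).trans ?_
    rw [mul_assoc]
    exact le_mul_of_one_le_left (by positivity) hA

end Partition

lemma one_add_mul_max_le {D : ℕ} (hD : 2 ≤ D) {c s₀ β : ℝ} (hc : 0 < c) (hs₀ : 1 ≤ s₀)
    (hβ : β ≤ 2) {N : ℕ} (hN : 1 ≤ N) :
    1 + ((D : ℝ) + 3) * max c (s₀ ^ β) ≤
      81 * (D : ℝ) ^ 2 * (c + 1) ^ 2 * s₀ ^ (2 * N) * (N : ℝ) ^ N := by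
  have hD' : (2 : ℝ) ≤ D := by exact_mod_cast hD
  have hs₀2 : 1 ≤ s₀ ^ 2 := one_le_pow₀ hs₀
  have hmax : max c (s₀ ^ β) ≤ (c + 1) * s₀ ^ 2 := by
    refine max_le (by nlinarith) ?_
    calc s₀ ^ β ≤ s₀ ^ (2 : ℝ) := rpow_le_rpow_of_exponent_le hs₀ hβ
      _ = 1 * s₀ ^ 2 := by rw [rpow_two, one_mul]
      _ ≤ (c + 1) * s₀ ^ 2 := by gcongr; linarith
  have hX : 1 ≤ (c + 1) * s₀ ^ 2 := by nlinarith
  have hXN : (c + 1) * s₀ ^ 2 ≤ (c + 1) ^ 2 * s₀ ^ (2 * N) * (N : ℝ) ^ N := by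
    have hs : s₀ ^ 2 ≤ s₀ ^ (2 * N) := pow_le_pow_right₀ hs₀ (by omega)
    have hNN : (1 : ℝ) ≤ (N : ℝ) ^ N := one_le_pow₀ (by exact_mod_cast hN)
    have hc2 : c + 1 ≤ (c + 1) ^ 2 := by nlinarith
    calc (c + 1) * s₀ ^ 2 ≤ (c + 1) ^ 2 * s₀ ^ (2 * N) * 1 := by
          rw [mul_one]; gcongr
      _ ≤ (c + 1) ^ 2 * s₀ ^ (2 * N) * (N : ℝ) ^ N := by gcongr
  calc 1 + ((D : ℝ) + 3) * max c (s₀ ^ β) ≤ (c + 1) * s₀ ^ 2 + (D + 3) * ((c + 1) * s₀ ^ 2) :=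
        add_le_add hX (mul_le_mul_of_nonneg_left hmax (by linarith))
    _ = (D + 4) * ((c + 1) * s₀ ^ 2) := by ring
    _ ≤ (81 * (D : ℝ) ^ 2) * ((c + 1) * s₀ ^ 2) :=
        mul_le_mul_of_nonneg_right (by nlinarith) (by linarith)
    _ ≤ (81 * (D : ℝ) ^ 2) * ((c + 1) ^ 2 * s₀ ^ (2 * N) * (N : ℝ) ^ N) := by gcongr
    _ = 81 * (D : ℝ) ^ 2 * (c + 1) ^ 2 * s₀ ^ (2 * N) * (N : ℝ) ^ N := by ring

/-- Bound for a nontrivial partition (`m ≥ 2` blocks of sizes `h₁,…,h_m` with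
`h_T = h₁ + ⋯ + h_m ≥ 5`) in the critical case `β = D/(D-1)`:
`(3k)^{m-1} (∏_{ℓ=1}^{m-1} ∫ J_{h_ℓ} dF) ∫ (k+s) J_{h_m}(s) dF(s)
  ≤ 81 D² (c₂+1)² s₀^{2h_T} h_T^{h_T} (3k)^{h_T} q^{D/(D-1)}`. -/
theorem decay_of_tails_jsq_stmt14
    (D : ℕ) (hD : 2 ≤ D) (c₂ s₀ : ℝ) (hc₂ : 0 < c₂) (hs₀ : 1 ≤ s₀)
    (F : Measure ℝ) [IsProbabilityMeasure F]
    (hsupp : F (Set.Ici (0:ℝ))ᶜ = 0) (hmean : ∫ s, s ∂F = 1)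
    (htail : ∀ s : ℝ, s₀ ≤ s →
      F (Set.Ioi s) ≤ ENNReal.ofReal (c₂ * s ^ (-((D:ℝ) / ((D:ℝ) - 1)))))
    (m : ℕ) (hm : 2 ≤ m) (h : ℕ → ℕ) (hpos : ∀ ℓ < m, 1 ≤ h ℓ)
    (hT : ℕ) (hhT : hT = ∑ ℓ ∈ Finset.range m, h ℓ) (hT5 : 5 ≤ hT)
    (k : ℝ)
    (hk : (D:ℝ) * max c₂ c₂⁻¹ * s₀ ^ (2 * hT) * (hT:ℝ) ^ (hT + 1) ≤ k)
    (q : ℝ) (hq0 : 0 < q)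
    (hq : q ≤ min c₂ (k ^ (-(((D:ℝ) - 1) * ((hT:ℝ) + 1))))) :
    (3 * k) ^ (m - 1) * (∏ ℓ ∈ Finset.range (m - 1), ∫ s, jsqPoissonTail q (h ℓ) s ∂F) *
        ∫ s, (k + s) * jsqPoissonTail q (h (m - 1)) s ∂F ≤
      81 * (D:ℝ) ^ 2 * (c₂ + 1) ^ 2 * s₀ ^ (2 * hT) * (hT:ℝ) ^ hT * (3 * k) ^ hT *
        q ^ ((D:ℝ) / ((D:ℝ) - 1)) := by
  set β : ℝ := (D : ℝ) / ((D : ℝ) - 1) with hβ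
  have hD' : (2 : ℝ) ≤ D := by exact_mod_cast hD
  have hβ1 : 1 < β := by rw [hβ, lt_div_iff₀ (by linarith)]; linarith
  have hβ2 : β ≤ 2 := by rw [hβ, div_le_iff₀ (by linarith)]; linarith
  have hβD : β / (β - 1) = D := by
    have hD1 : (D : ℝ) - 1 ≠ 0 := by linarith
    rw [hβ, div_sub_one hD1, div_div_div_cancel_right₀ hD1, sub_sub_cancel, div_one]
  have hk1 : 1 ≤ k := by
    refine le_trans ?_ hk
    have hmax : 1 ≤ max c₂ c₂⁻¹ := (le_total c₂ 1).elim
      (fun hc => le_max_of_le_right ((one_le_inv₀ hc₂).2 hc)) le_max_of_le_left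
    have hT1 : (1 : ℝ) ≤ hT := by exact_mod_cast (by omega : 1 ≤ hT)
    exact one_le_mul_of_one_le_of_one_le (one_le_mul_of_one_le_of_one_le
      (one_le_mul_of_one_le_of_one_le (by linarith) hmax) (one_le_pow₀ hs₀)) (one_le_pow₀ hT1)
  have hq1 : q ≤ 1 := (hq.trans (min_le_right _ _)).trans <|
    rpow_le_one_of_one_le_of_nonpos hk1 (neg_nonpos.2 (mul_nonneg (by linarith) (by positivity)))
  have hF : ∀ᵐ s ∂F, 0 ≤ s := mem_ae_iff.2 hsupp
  have htail' := fun t (ht : 0 < t) =>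
    measure_Ioi_le_max_mul_rpow (by linarith : (0 : ℝ) < s₀) (by linarith) htail ht
  calc _ = partitionContribution F q k m h := rfl
    _ ≤ (1 + (β / (β - 1) + 3) * max c₂ (s₀ ^ β)) * (3 * k) ^ hT * q ^ β := by
        rw [hhT]
        exact partitionContribution_le hF hmean htail' (le_max_of_le_left hc₂.le) hβ1 hβ2 hq0 hq1
          hk1 hm hpos (by omega)
    _ ≤ _ := by
        rw [hβD]
        gcongr
        exact one_add_mul_max_le hD hc₂ hs₀ hβ2 (by omega)
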